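/- Cassini's identity for hyperbolic k-Fibonacci quaternions: for n ≥ 1, HF_{k,n−1}·HF_{k,n+1} − HF_{k,n}² = (−1)^n·(0, 2k, 2(k²+1), k³+2k), where the product of hyperbolic quaternions uses the multiplication rules i² = j² = k² = 1, ij = k = −ji, jk = i = −kj, ki = j = −ik. -/

import Mathlib

noncomputable def kFib (k : ℝ) : ℕ → ℝ
  | 0 => 0
  | 1 => 1
  | (n + 2) => k * kFib k (n + 1) + kFib k n

noncomputable def kLucas (k : ℝ) : ℕ → ℝ
  | 0 => 2
  | 1 => k
  | (n + 2) => k * kLucas k (n + 1) + kLucas k n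

noncomputable def HF (k : ℝ) (n : ℕ) : Fin 4 → ℝ :=
  ![kFib k n, kFib k (n + 1), kFib k (n + 2), kFib k (n + 3)]

noncomputable def HL (k : ℝ) (n : ℕ) : Fin 4 → ℝ :=
  ![kLucas k n, kLucas k (n + 1), kLucas k (n + 2), kLucas k (n + 3)]

def hconj (a : Fin 4 → ℝ) : Fin 4 → ℝ := ![a 0, -a 1, -a 2, -a 3]

def hmul (a b : Fin 4 → ℝ) : Fin 4 → ℝ :=
  ![a 0 * b 0 + a 1 * b 1 + a 2 * b 2 + a 3 * b 3,
    a 0 * b 1 + a 1 * b 0 + a 2 * b 3 - a 3 * b 2,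
    a 0 * b 2 + a 2 * b 0 - a 1 * b 3 + a 3 * b 1,
    a 0 * b 3 + a 3 * b 0 + a 1 * b 2 - a 2 * b 1]

/-! The Cassini expression `B (x n) (x (n + 2)) - B (x (n + 1)) (x (n + 1))` of a sequence obeying
`x (n + 2) = k • x (n + 1) + x n` only changes sign from one `n` to the next, for any bilinear `B`,
commutative or not. The hyperbolic quaternion product is bilinear and `HF k` obeys the k-Fibonacci
recurrence, so the identity reduces to computing the expression at `n = 0`. -/

theorem LinearMap.cassini_of_recurrence {R M N : Type*} [CommRing R]
    [AddCommGroup M] [Module R M] [AddCommGroup N] [Module R N] (B : M →ₗ[R] M →ₗ[R] N)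
    (k : R) (x : ℕ → M) (hx : ∀ n, x (n + 2) = k • x (n + 1) + x n) (n : ℕ) :
    B (x n) (x (n + 2)) - B (x (n + 1)) (x (n + 1)) =
      (-1 : R) ^ n • (B (x 0) (x 2) - B (x 1) (x 1)) := by
  induction n with
  | zero => simp
  | succ n ih =>
    have step : B (x (n + 1)) (x (n + 3)) - B (x (n + 2)) (x (n + 2)) =
        -(B (x n) (x (n + 2)) - B (x (n + 1)) (x (n + 1))) := by
      rw [hx (n + 1)]
      nth_rewrite 2 [hx n]
      simp only [map_add, map_smul, LinearMap.add_apply, LinearMap.smul_apply]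
      abel
    rw [step, ih, pow_succ]
    module

lemma kFib_add_two (k : ℝ) (n : ℕ) : kFib k (n + 2) = k * kFib k (n + 1) + kFib k n := rfl

lemma HF_add_two (k : ℝ) (n : ℕ) : HF k (n + 2) = k • HF k (n + 1) + HF k n := by
  ext i
  fin_cases i <;> simp [HF, kFib_add_two]

def hmulₗ : (Fin 4 → ℝ) →ₗ[ℝ] (Fin 4 → ℝ) →ₗ[ℝ] (Fin 4 → ℝ) :=
  LinearMap.mk₂ ℝ hmul
    (fun a a' b => by ext i; fin_cases i <;> simp [hmul] <;> ring)
    (fun c a b => by ext i; fin_cases i <;> simp [hmul] <;> ring)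
    (fun a b b' => by ext i; fin_cases i <;> simp [hmul] <;> ring)
    (fun c a b => by ext i; fin_cases i <;> simp [hmul] <;> ring)

lemma HF_cassini_zero (k : ℝ) :
    hmul (HF k 0) (HF k 2) - hmul (HF k 1) (HF k 1) =
      -![(0 : ℝ), 2 * k, 2 * (k ^ 2 + 1), k ^ 3 + 2 * k] := by
  ext i
  fin_cases i <;> simp [HF, hmul, kFib] <;> ring

theorem HF_cassini_general (k : ℝ) (n : ℕ) (hn : 1 ≤ n) :
    hmul (HF k (n - 1)) (HF k (n + 1)) - hmul (HF k n) (HF k n) =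
      ((-1 : ℝ) ^ n) • ![(0 : ℝ), 2 * k, 2 * (k ^ 2 + 1), k ^ 3 + 2 * k] := by
  obtain ⟨m, rfl⟩ := Nat.exists_eq_add_of_le' hn
  have h := hmulₗ.cassini_of_recurrence k (HF k) (HF_add_two k) m
  simp only [hmulₗ, LinearMap.mk₂_apply] at h
  rw [Nat.add_sub_cancel, h, HF_cassini_zero, pow_succ (-1 : ℝ) m, mul_neg_one, neg_smul,
    smul_neg]

theorem HF_cassini (k : ℝ) (hk : 0 < k) (n : ℕ) (hn : 1 ≤ n) :
    hmul (HF k (n - 1)) (HF k (n + 1)) - hmul (HF k n) (HF k n) =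
      ((-1 : ℝ) ^ n) • ![(0 : ℝ), 2 * k, 2 * (k ^ 2 + 1), k ^ 3 + 2 * k] :=
  HF_cassini_general k n hn
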